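/- Let f : A → B be a ring homomorphism and M a B-module, regarded as an A-module via f. Then the augmented cosimplicial A-module M → M ⊗_A B → M ⊗_A B ⊗_A B → ⋯ (with coface maps inserting 1's) is chain homotopy equivalent to the constant complex M; in particular, the associated augmented cochain complex 0 → M → M ⊗_A B → M ⊗_A B^{⊗_A 2} → ⋯ is exact. -/

import Mathlib

open TensorProduct

universe u

variable (A B : Type u) [CommRing A] [CommRing B] [Algebra A B]

/-- `AmitsurPow A B n` is the `n`-fold tensor power `B ⊗[A] ⋯ ⊗[A] B`, with
`AmitsurPow A B 0 = A`. -/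
noncomputable def AmitsurPow (n : ℕ) : ModuleCat.{u} A :=
  Nat.rec (ModuleCat.of A A) (fun _ Tn => ModuleCat.of A (Tn ⊗[A] B)) n

/-- The `i`-th coface (unit-insertion) map `B^{⊗ n} → B^{⊗ (n+1)}`, inserting a `1`
into the `i`-th tensor slot. -/
noncomputable def amitsurIns :
    ∀ n : ℕ, Fin (n + 1) → ((AmitsurPow A B n) →ₗ[A] (AmitsurPow A B (n + 1)))
  | 0, _ => (TensorProduct.mk A (AmitsurPow A B 0) B).flip 1
  | n + 1, i =>
    Fin.lastCases
      ((TensorProduct.mk A (AmitsurPow A B (n + 1)) B).flip 1)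
      (fun j => TensorProduct.map (amitsurIns n j) (LinearMap.id (R := A) (M := B)))
      i

/-- The Amitsur differential `B^{⊗ n} → B^{⊗ (n+1)}`, the alternating sum of the
unit-insertion maps.  In degree `0` it is the structure map `A → B`. -/
noncomputable def amitsurD (n : ℕ) : (AmitsurPow A B n) →ₗ[A] (AmitsurPow A B (n + 1)) :=
  ∑ i : Fin (n + 1), ((-1 : ℤ) ^ (i : ℕ)) • amitsurIns A B n i

/-!
Write `B^{⊗(n+1)} = B^{⊗n} ⊗ B`. Splitting off the last coface map gives the recursion
`d (t ⊗ b) = d t ⊗ b + (-1)^(n+1) (t ⊗ b) ⊗ 1`, from which `d ∘ d = 0` follows by induction.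
Letting the last tensor factor act on `M`, `h (m ⊗ t ⊗ b) = b m ⊗ t`, the same recursion gives
`h ∘ d = d ∘ h + (-1)^(n+1)`, so the maps `(-1)^n h` form a contracting homotopy of the augmented
complex, which is therefore exact.
-/

theorem LinearMap.exact_of_homotopy {R M N P : Type*} [Ring R] [AddCommGroup M]
    [AddCommGroup N] [AddCommGroup P] [Module R M] [Module R N] [Module R P]
    {f : M →ₗ[R] N} {g : N →ₗ[R] P} (s : N →ₗ[R] M) (t : P →ₗ[R] N)
    (hgf : g ∘ₗ f = 0) (hst : f ∘ₗ s + t ∘ₗ g = LinearMap.id) : Function.Exact f g :=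
  LinearMap.exact_of_comp_of_mem_range hgf fun x hx =>
    ⟨s x, by simpa [hx] using LinearMap.congr_fun hst x⟩

namespace AmitsurPow

-- The identity, named so that lemmas can be stated and rewritten without unfolding `AmitsurPow`.
noncomputable def succEquiv (n : ℕ) : (AmitsurPow A B n ⊗[A] B) ≃ₗ[A] AmitsurPow A B (n + 1) :=
  LinearEquiv.refl A _

end AmitsurPow

lemma amitsurIns_last (n : ℕ) :
    amitsurIns A B n (Fin.last n) =
      (AmitsurPow.succEquiv A B n).toLinearMap ∘ₗ (TensorProduct.mk A _ B).flip 1 := by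
  cases n with
  | zero => rfl
  | succ n => exact Fin.lastCases_last ..

lemma amitsurIns_castSucc (n : ℕ) (j : Fin (n + 1)) :
    amitsurIns A B (n + 1) j.castSucc =
      (AmitsurPow.succEquiv A B (n + 1)).toLinearMap ∘ₗ
        TensorProduct.map (amitsurIns A B n j) LinearMap.id ∘ₗ
          (AmitsurPow.succEquiv A B n).symm.toLinearMap :=
  Fin.lastCases_castSucc ..

lemma amitsurD_zero_apply (a : AmitsurPow A B 0) :
    amitsurD A B 0 a = AmitsurPow.succEquiv A B 0 (a ⊗ₜ 1) := by
  rw [amitsurD, Fin.sum_univ_one, Fin.val_zero, pow_zero, one_smul]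
  rfl

lemma amitsurD_succ_apply (n : ℕ) (t : AmitsurPow A B n) (b : B) :
    amitsurD A B (n + 1) (AmitsurPow.succEquiv A B n (t ⊗ₜ b)) =
      AmitsurPow.succEquiv A B (n + 1) (amitsurD A B n t ⊗ₜ b) +
        (-1 : ℤ) ^ (n + 1) •
          AmitsurPow.succEquiv A B (n + 1) (AmitsurPow.succEquiv A B n (t ⊗ₜ b) ⊗ₜ 1) := by
  simp [amitsurD, Fin.sum_univ_castSucc, amitsurIns_castSucc, amitsurIns_last,
    TensorProduct.add_tmul, TensorProduct.sum_tmul, ← TensorProduct.smul_tmul']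

lemma amitsurD_succ_comp_amitsurD (n : ℕ) : amitsurD A B (n + 1) ∘ₗ amitsurD A B n = 0 := by
  induction n with
  | zero =>
    refine LinearMap.ext fun a => ?_
    simp [amitsurD_zero_apply, amitsurD_succ_apply]
  | succ n ih =>
    refine (LinearMap.cancel_right (AmitsurPow.succEquiv A B n).surjective).1 ?_
    ext t b
    have ih_t : amitsurD A B (n + 1) (amitsurD A B n t) = 0 := LinearMap.congr_fun ih t
    simp only [AlgebraTensorModule.curry_apply, LinearMap.restrictScalars_self, curry_apply,
      LinearMap.coe_comp, LinearEquiv.coe_coe, Function.comp_apply, amitsurD_succ_apply, map_add,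
      ih_t, zero_tmul, map_zero, zero_add, add_tmul, ← smul_tmul',
      map_zsmul, smul_add, LinearMap.zero_apply]
    module

section Contraction

variable {R S : Type*} [CommSemiring R] [CommSemiring S] [Algebra R S]
  (M N : Type*) [AddCommMonoid M] [Module R M] [Module S M] [IsScalarTower R S M]
  [AddCommMonoid N] [Module R N]

noncomputable def TensorProduct.absorbLast : M ⊗[R] (N ⊗[R] S) →ₗ[R] M ⊗[R] N :=
  TensorProduct.lift (Algebra.lsmul R R (M ⊗[R] N)).toLinearMap.flip ∘ₗ
    (TensorProduct.assoc R M N S).symm.toLinearMap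

@[simp]
lemma TensorProduct.absorbLast_tmul (m : M) (n : N) (s : S) :
    TensorProduct.absorbLast M N (m ⊗ₜ (n ⊗ₜ s)) = (s • m) ⊗ₜ[R] n := by
  simp [TensorProduct.absorbLast, TensorProduct.smul_tmul']

end Contraction

section Homotopy

variable (M : Type u) [AddCommGroup M] [Module B M] [Module A M] [IsScalarTower A B M]

noncomputable def amitsurContraction (n : ℕ) :
    M ⊗[A] AmitsurPow A B (n + 1) →ₗ[A] M ⊗[A] AmitsurPow A B n :=
  TensorProduct.absorbLast M (AmitsurPow A B n) ∘ₗ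
    ((AmitsurPow.succEquiv A B n).symm.lTensor M).toLinearMap

@[simp]
lemma amitsurContraction_tmul (n : ℕ) (m : M) (t : AmitsurPow A B n) (b : B) :
    amitsurContraction A B M n (m ⊗ₜ AmitsurPow.succEquiv A B n (t ⊗ₜ b)) = (b • m) ⊗ₜ t := by
  simp [amitsurContraction]

lemma amitsurContraction_comp_lTensor_amitsurD_succ (n : ℕ) :
    amitsurContraction A B M (n + 1) ∘ₗ (amitsurD A B (n + 1)).lTensor M =
      (amitsurD A B n).lTensor M ∘ₗ amitsurContraction A B M n +
        (-1 : ℤ) ^ (n + 1) • LinearMap.id := by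
  refine (LinearMap.cancel_right
    ((AmitsurPow.succEquiv A B n).lTensor M).surjective).1 ?_
  ext m t b
  simp [amitsurD_succ_apply, TensorProduct.tmul_add, -zsmul_eq_mul]

noncomputable def amitsurHomotopy (n : ℕ) :
    M ⊗[A] AmitsurPow A B (n + 1) →ₗ[A] M ⊗[A] AmitsurPow A B n :=
  (-1 : ℤ) ^ n • amitsurContraction A B M n

lemma amitsurHomotopy_zero_comp_lTensor_amitsurD :
    amitsurHomotopy A B M 0 ∘ₗ (amitsurD A B 0).lTensor M = LinearMap.id := by
  refine TensorProduct.ext' fun m a => ?_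
  simp [amitsurHomotopy, amitsurD_zero_apply]

lemma lTensor_amitsurD_comp_amitsurHomotopy_add (n : ℕ) :
    (amitsurD A B n).lTensor M ∘ₗ amitsurHomotopy A B M n +
      amitsurHomotopy A B M (n + 1) ∘ₗ (amitsurD A B (n + 1)).lTensor M = LinearMap.id := by
  have hsign : ((-1 : ℤ) ^ n) * (-1) ^ n = 1 := by rw [← mul_pow]; simp
  simp only [amitsurHomotopy, LinearMap.comp_smul, LinearMap.smul_comp,
    amitsurContraction_comp_lTensor_amitsurD_succ]
  linear_combination (norm := module)
    hsign • (LinearMap.id : M ⊗[A] AmitsurPow A B (n + 1) →ₗ[A] _)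

end Homotopy

/-- For a ring map `A → B` and a `B`-module `M` (regarded as an `A`-module), the augmented
cosimplicial complex `0 → M → M ⊗[A] B → M ⊗[A] B^{⊗ 2} → ⋯` (with differentials obtained
from the Amitsur differentials by tensoring with `M`) is chain-null-homotopic, via a
contracting homotopy coming from the `B`-action on `M`; in particular it is exact.
(Here the degree-`n` term is `M ⊗[A] B^{⊗ n}`, with `M ⊗[A] B^{⊗ 0} = M ⊗[A] A ≅ M`.) -/
theorem amitsur_complex_with_coefficients_null_homotopic
    (M : Type u) [AddCommGroup M] [Module B M] [Module A M] [IsScalarTower A B M] :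
    (∃ s : ∀ n : ℕ,
        (M ⊗[A] (AmitsurPow A B (n + 1))) →ₗ[A] (M ⊗[A] (AmitsurPow A B n)),
      (s 0).comp (LinearMap.lTensor M (amitsurD A B 0)) = LinearMap.id ∧
      ∀ n : ℕ, (LinearMap.lTensor M (amitsurD A B n)).comp (s n) +
        (s (n + 1)).comp (LinearMap.lTensor M (amitsurD A B (n + 1))) = LinearMap.id) ∧
    Function.Injective (LinearMap.lTensor M (amitsurD A B 0)) ∧
    ∀ n : ℕ, LinearMap.ker (LinearMap.lTensor M (amitsurD A B (n + 1))) =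
      LinearMap.range (LinearMap.lTensor M (amitsurD A B n)) := by
  have hd (n : ℕ) : (amitsurD A B (n + 1)).lTensor M ∘ₗ (amitsurD A B n).lTensor M = 0 := by
    rw [← LinearMap.lTensor_comp, amitsurD_succ_comp_amitsurD, LinearMap.lTensor_zero]
  have h₀ := amitsurHomotopy_zero_comp_lTensor_amitsurD A B M
  have hsucc := lTensor_amitsurD_comp_amitsurHomotopy_add A B M
  refine ⟨⟨amitsurHomotopy A B M, h₀, hsucc⟩, ?_, fun n => ?_⟩
  · exact Function.LeftInverse.injective (g := amitsurHomotopy A B M 0) (LinearMap.congr_fun h₀)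
  · exact (LinearMap.exact_of_homotopy _ _ (hd n) (hsucc n)).linearMap_ker_eq
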